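/- Let K₀ ⊆ K be totally real fields such that every totally nonnegative element of O_{K₀} has a square root in K, and let L be a totally imaginary quadratic extension of K. Then the subsets of O_L defined by X₀ = {u₁² + u₂² − u₃² − u₄² : u₁, u₂, u₃, u₄ units of R_{2,L}}, X₁ = {d ∈ O_L : 32·d ∈ X₀}, and X = {α ∈ O_L : there exist x₁, x₂ ∈ X₁ with 4·α = x₁ − x₂} satisfy O_{K₀} ⊆ X ⊆ O_K (where O_{K₀} and O_K are viewed as subsets of O_L). -/

import Mathlib

open Complex

noncomputable section

/-- The ring of integers of a subfield `L ⊆ ℂ`: the elements of `L` that are integral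
over `ℤ`, viewed as a subring of `ℂ`. -/
def ringOfInt (L : Subfield ℂ) : Subring ℂ where
  carrier := {x : ℂ | x ∈ L ∧ IsIntegral ℤ x}
  zero_mem' := ⟨L.zero_mem, isIntegral_zero⟩
  one_mem' := ⟨L.one_mem, isIntegral_one⟩
  add_mem' := fun hx hy => ⟨L.add_mem hx.1 hy.1, hx.2.add hy.2⟩
  mul_mem' := fun hx hy => ⟨L.mul_mem hx.1 hy.1, hx.2.mul hy.2⟩
  neg_mem' := fun hx => ⟨L.neg_mem hx.1, hx.2.neg⟩

lemma ringOfInt_mem_subfield {L : Subfield ℂ} {x : ℂ} (hx : x ∈ ringOfInt L) : x ∈ L := hx.1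

/-- The underlying set of the ring `R_{m,L} = {x ∈ O_L : ∃ a ∈ O_L, ∃ j, 0 ≤ j < m, x = j + m·a}`. -/
def Rset (m : ℕ) (L : Subfield ℂ) : Set ℂ :=
  {x : ℂ | x ∈ ringOfInt L ∧
    ∃ a ∈ ringOfInt L, ∃ j : ℤ, 0 ≤ j ∧ j < (m : ℤ) ∧ x = (j : ℂ) + (m : ℂ) * a}

lemma Rset_norm {m : ℕ} (hm : m ≠ 0) {L : Subfield ℂ} {x : ℂ} (hx : x ∈ ringOfInt L)
    {a : ℂ} (ha : a ∈ ringOfInt L) {j : ℤ} (h : x = (j : ℂ) + (m : ℂ) * a) :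
    x ∈ Rset m L := by
  have hm' : (0 : ℤ) < m := by exact_mod_cast Nat.pos_of_ne_zero hm
  refine ⟨hx, a + ((j / (m : ℤ) : ℤ) : ℂ), ?_, j % m,
    Int.emod_nonneg j (by exact_mod_cast hm), Int.emod_lt_of_pos j hm', ?_⟩
  · exact (ringOfInt L).add_mem ha (intCast_mem (ringOfInt L) _)
  · have key : ((m : ℤ) * (j / (m : ℤ)) + j % (m : ℤ) : ℤ) = j := Int.mul_ediv_add_emod j m
    have key' := congrArg (Int.cast : ℤ → ℂ) key
    push_cast at key'
    rw [h]
    linear_combination -key'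

/-- The ring `R_{m,L}`, as a subring of `ℂ`. -/
def Rring (m : ℕ) (hm : m ≠ 0) (L : Subfield ℂ) : Subring ℂ where
  carrier := Rset m L
  zero_mem' := Rset_norm hm (ringOfInt L).zero_mem (ringOfInt L).zero_mem (j := 0) (by simp)
  one_mem' := Rset_norm hm (ringOfInt L).one_mem (ringOfInt L).zero_mem (j := 1) (by simp)
  add_mem' := by
    rintro x y ⟨hx, a, ha, j, _, _, rfl⟩ ⟨hy, b, hb, k, _, _, rfl⟩
    exact Rset_norm hm ((ringOfInt L).add_mem hx hy) ((ringOfInt L).add_mem ha hb)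
      (j := j + k) (by push_cast; ring)
  mul_mem' := by
    rintro x y ⟨hx, a, ha, j, _, _, rfl⟩ ⟨hy, b, hb, k, _, _, rfl⟩
    refine Rset_norm hm ((ringOfInt L).mul_mem hx hy)
      (a := (j : ℂ) * b + (k : ℂ) * a + (m : ℂ) * (a * b)) ?_ (j := j * k) (by push_cast; ring)
    exact (ringOfInt L).add_mem
      ((ringOfInt L).add_mem ((ringOfInt L).mul_mem (intCast_mem _ j) hb)
        ((ringOfInt L).mul_mem (intCast_mem _ k) ha))
      ((ringOfInt L).mul_mem (natCast_mem _ m) ((ringOfInt L).mul_mem ha hb))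
  neg_mem' := by
    rintro x ⟨hx, a, ha, j, _, _, rfl⟩
    exact Rset_norm hm ((ringOfInt L).neg_mem hx) ((ringOfInt L).neg_mem ha)
      (j := -j) (by push_cast; ring)

lemma twoNZ : (2 : ℕ) ≠ 0 := by norm_num

/-- A subfield of `ℂ` is totally real if every embedding into `ℂ` has real image. -/
def IsTotallyRealSubfield (K : Subfield ℂ) : Prop :=
  ∀ (σ : K →+* ℂ) (x : K), (σ x).im = 0

/-- A subfield of `ℂ` is totally imaginary if no embedding into `ℂ` has real image. -/
def IsTotallyImaginarySubfield (L : Subfield ℂ) : Prop :=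
  ∀ σ : L →+* ℂ, ∃ x : L, (σ x).im ≠ 0

/-- `L` is a totally imaginary quadratic extension of the totally real field `K`:
`K ⊆ L ⊆ ℂ` are algebraic over `ℚ`, `L` is closed under complex conjugation,
`[L : K] = 2`, `K` is totally real and `L` is totally imaginary. -/
structure IsTIQExt (K L : Subfield ℂ) : Prop where
  le : K ≤ L
  alg : ∀ x : L, IsAlgebraic ℚ (x : ℂ)
  conj_closed : ∀ x ∈ L, (starRingEnd ℂ) x ∈ L
  tot_real : IsTotallyRealSubfield K
  tot_imaginary : IsTotallyImaginarySubfield L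
  deg : letI := (Subfield.inclusion le).toAlgebra; Module.finrank K L = 2

/-- An algebraic number `α ∈ ℂ` is totally real if all complex roots of its minimal
polynomial over `ℚ` are real. -/
def TotallyRealNum (α : ℂ) : Prop :=
  IsAlgebraic ℚ α ∧ ∀ z : ℂ, Polynomial.aeval z (minpoly ℚ α) = 0 → z.im = 0

/-- The set `X₀ = {u₁² + u₂² − u₃² − u₄² : uᵢ ∈ R_{2,L}ˣ}`. -/
def X0 (L : Subfield ℂ) : Set ℂ :=
  {x : ℂ | ∃ u₁ u₂ u₃ u₄ : (Rring 2 twoNZ L)ˣ,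
    x = ((u₁ : Rring 2 twoNZ L) : ℂ) ^ 2 + ((u₂ : Rring 2 twoNZ L) : ℂ) ^ 2
      - ((u₃ : Rring 2 twoNZ L) : ℂ) ^ 2 - ((u₄ : Rring 2 twoNZ L) : ℂ) ^ 2}

/-- The set `X₁ = {d ∈ O_L : 32·d ∈ X₀}`. -/
def X1 (L : Subfield ℂ) : Set ℂ :=
  {d : ℂ | d ∈ ringOfInt L ∧ 32 * d ∈ X0 L}

/-- The set `X = {α ∈ O_L : ∃ x₁, x₂ ∈ X₁, 4·α = x₁ − x₂}`. -/
def XX (L : Subfield ℂ) : Set ℂ :=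
  {α : ℂ | α ∈ ringOfInt L ∧ ∃ x₁ ∈ X1 L, ∃ x₂ ∈ X1 L, 4 * α = x₁ - x₂}

/-- The set of all totally real algebraic numbers (the field `ℚ^tr`). -/
def QtrSet : Set ℂ := {z : ℂ | TotallyRealNum z}

/-- The field `ℚ^tr(i)`, the subfield of `ℂ` generated by all totally real numbers and `i`. -/
def QtrI : Subfield ℂ := Subfield.closure (QtrSet ∪ {Complex.I})


section Helpers

lemma not_integral_half : ¬ IsIntegral ℤ (((1:ℚ)/2 : ℚ) : ℂ) := by
  intro hint
  rw [show (((1:ℚ)/2 : ℚ) : ℂ) = algebraMap ℚ ℂ ((1:ℚ)/2) from rfl,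
    isIntegral_algebraMap_iff (algebraMap ℚ ℂ).injective] at hint
  obtain ⟨y, hy⟩ := IsIntegrallyClosed.isIntegral_iff.mp hint
  have : (y : ℚ) = 1/2 := hy
  have h2 : ((2*y : ℤ) : ℚ) = 1 := by push_cast; rw [this]; ring
  have : (2*y : ℤ) = 1 := by exact_mod_cast h2
  omega

lemma conj_integral {x : ℂ} (hx : IsIntegral ℤ x) : IsIntegral ℤ ((starRingEnd ℂ) x) :=
  hx.map (starRingEnd ℂ).toIntAlgHom


end Helpers

section TIQ

variable {K L : Subfield ℂ}

lemma mem_real_of_totallyReal (hK : IsTotallyRealSubfield K) {x : ℂ} (hx : x ∈ K) : x.im = 0 :=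
  hK K.subtype ⟨x, hx⟩

lemma IsTIQExt.exists_repr (h : IsTIQExt K L) :
    ∃ δ : L, (δ:ℂ).im ≠ 0 ∧ (starRingEnd ℂ) (δ:ℂ) = -(δ:ℂ) ∧
      ∀ y : L, ∃ c₀ c₁ : K, (y:ℂ) = (c₀:ℂ) * (δ:ℂ) + (c₁:ℂ) := by
  letI : Algebra K L := (Subfield.inclusion h.le).toAlgebra
  have hrank : Module.finrank K L = 2 := h.deg
  obtain ⟨w, hw⟩ := h.tot_imaginary L.subtype
  have hwim : (w:ℂ).im ≠ 0 := hw
  refine ⟨⟨(w:ℂ) - (starRingEnd ℂ) (w:ℂ), L.sub_mem w.2 (h.conj_closed _ w.2)⟩, ?_, ?_, ?_⟩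
  · simp only [Complex.sub_im, Complex.conj_im]
    intro hcon
    apply hwim; linarith [hcon]
  · simp only [map_sub, Complex.conj_conj]; ring
  · set δ : L := ⟨(w:ℂ) - (starRingEnd ℂ) (w:ℂ), L.sub_mem w.2 (h.conj_closed _ w.2)⟩ with hδdef
    have hδim : (δ:ℂ).im ≠ 0 := by
      simp only [hδdef, Complex.sub_im, Complex.conj_im]
      intro hcon; apply hwim; linarith [hcon]
    have hcoe : ∀ c : K, ((algebraMap K L c : L) : ℂ) = (c : ℂ) := fun c => rfl
    have hindep : LinearIndependent K ![δ, (1:L)] := by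
      rw [linearIndependent_fin2]
      constructor
      · simp only [Matrix.cons_val_one, Matrix.head_cons]
        exact one_ne_zero
      · intro a ha
        simp only [Matrix.cons_val_one, Matrix.head_cons, Matrix.cons_val_zero] at ha
        have : ((a • (1:L) : L) : ℂ) = (δ:ℂ) := by rw [ha]
        rw [Algebra.smul_def, mul_one, hcoe] at this
        have : ((a:ℂ)).im = (δ:ℂ).im := by rw [this]
        rw [mem_real_of_totallyReal h.tot_real a.2] at this
        exact hδim this.symm
    have hcard : Fintype.card (Fin 2) = Module.finrank K L := by simp [hrank]
    let B := basisOfLinearIndependentOfCardEqFinrank hindep hcard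
    have hB : ⇑B = ![δ, (1:L)] := coe_basisOfLinearIndependentOfCardEqFinrank hindep hcard
    intro y
    have hy := B.sum_repr y
    rw [Fin.sum_univ_two, hB] at hy
    simp only [Matrix.cons_val_zero, Matrix.cons_val_one, Matrix.head_cons] at hy
    refine ⟨B.repr y 0, B.repr y 1, ?_⟩
    have := congrArg (fun z : L => (z : ℂ)) hy
    rw [← this]
    push_cast [Algebra.smul_def, hcoe]
    ring

lemma IsTIQExt.mem_of_conj_eq (h : IsTIQExt K L) {x : ℂ} (hx : x ∈ L)
    (hc : (starRingEnd ℂ) x = x) : x ∈ K := by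
  obtain ⟨δ, hδim, hδconj, hrepr⟩ := h.exists_repr
  obtain ⟨c₀, c₁, hy⟩ := hrepr ⟨x, hx⟩
  simp only at hy
  have him : x.im = 0 := Complex.conj_eq_iff_im.mp hc
  have h0 : (c₀:ℂ).im = 0 := mem_real_of_totallyReal h.tot_real c₀.2
  have h1 : (c₁:ℂ).im = 0 := mem_real_of_totallyReal h.tot_real c₁.2
  have him2 : x.im = (c₀:ℂ).re * (δ:ℂ).im := by
    rw [hy]; simp [Complex.add_im, Complex.mul_im, h0, h1]
  have hre : (c₀:ℂ).re = 0 := by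
    rcases mul_eq_zero.mp (him2 ▸ him :  (c₀:ℂ).re * (δ:ℂ).im = 0) with h'|h'
    exacts [h', absurd h' hδim]
  have hc0 : (c₀:ℂ) = 0 := Complex.ext hre h0
  have hx1 : x = (c₁:ℂ) := by rw [hy, hc0]; ring
  rw [hx1]; exact c₁.2

lemma IsTIQExt.emb_conj_comm (h : IsTIQExt K L) (τ : L →+* ℂ) (x : L) :
    τ ⟨(starRingEnd ℂ) (x:ℂ), h.conj_closed _ x.2⟩ = (starRingEnd ℂ) (τ x) := by
  obtain ⟨δ, hδim, hδconj, hrepr⟩ := h.exists_repr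
  set iK : K →+* L := Subfield.inclusion h.le with hiK
  have hreal : ∀ c : K, (τ (iK c)).im = 0 := fun c => h.tot_real (τ.comp iK) c
  have hconjK : ∀ c : K, (starRingEnd ℂ) ((c:ℂ)) = (c:ℂ) := fun c =>
    Complex.conj_eq_iff_im.mpr (mem_real_of_totallyReal h.tot_real c.2)
  -- δ² lies in K
  have hδsqK : ((δ:ℂ))^2 ∈ K := by
    apply h.mem_of_conj_eq (L.pow_mem δ.2 2)
    rw [map_pow, hδconj]; ring
  have hτδsq_im : ((τ δ)^2).im = 0 := by
    have : (δ * δ : L) = iK ⟨(δ:ℂ)^2, hδsqK⟩ := by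
      apply Subtype.ext; simp [hiK]; ring_nf; rfl
    have h2 : (τ δ)^2 = τ (iK ⟨(δ:ℂ)^2, hδsqK⟩) := by rw [← this, map_mul]; ring
    rw [h2]; exact hreal _
  have hτδim : (τ δ).im ≠ 0 := by
    intro him0
    obtain ⟨y, hy⟩ := h.tot_imaginary τ
    obtain ⟨c₀, c₁, hyrep⟩ := hrepr y
    have hyL : y = iK c₀ * δ + iK c₁ := by apply Subtype.ext; exact hyrep
    apply hy
    rw [hyL, map_add, map_mul]
    simp [Complex.add_im, Complex.mul_im, hreal c₀, hreal c₁, him0]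
  have hre0 : (τ δ).re = 0 := by
    have := hτδsq_im
    rw [sq, Complex.mul_im] at this
    rcases mul_eq_zero.mp (by linarith : (2:ℝ) * ((τ δ).re * (τ δ).im) = 0) with h'|h'
    · norm_num at h'
    · rcases mul_eq_zero.mp h' with h''|h''
      exacts [h'', absurd h'' hτδim]
  have hτδconj : (starRingEnd ℂ) (τ δ) = -(τ δ) := by
    apply Complex.ext <;> simp [hre0]
  obtain ⟨c₀, c₁, hxrep⟩ := hrepr x
  have hxL : x = iK c₀ * δ + iK c₁ := by apply Subtype.ext; exact hxrep
  have hcxL : (⟨(starRingEnd ℂ) (x:ℂ), h.conj_closed _ x.2⟩ : L) = -(iK c₀) * δ + iK c₁ := by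
    apply Subtype.ext
    show (starRingEnd ℂ) (x:ℂ) = -(c₀:ℂ) * (δ:ℂ) + (c₁:ℂ)
    rw [hxrep, map_add, map_mul, hconjK c₀, hconjK c₁, hδconj]; ring
  rw [hcxL, hxL]
  rw [map_add, map_mul, map_add, map_mul, map_neg]
  rw [map_add, map_mul, hτδconj]
  rw [Complex.conj_eq_iff_im.mpr (hreal c₀), Complex.conj_eq_iff_im.mpr (hreal c₁)]
  ring

set_option maxHeartbeats 1000000 in
lemma ringhom_extension {F : Type*} [Field F] (h : IsTIQExt K L)
    (i : F →+* L) (σ : F →+* ℂ) :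
    ∃ ρ : L →+* ℂ, ∀ x : F, ρ (i x) = σ x := by
  letI : Algebra F ℂ := σ.toAlgebra
  letI : Algebra F L := i.toAlgebra
  haveI : CharZero F := σ.charZero
  haveI : IsScalarTower ℚ F L := IsScalarTower.of_algebraMap_eq' (Subsingleton.elim _ _)
  haveI : Algebra.IsAlgebraic ℚ L := ⟨fun z => by
    have := h.alg z
    exact (isAlgebraic_algebraMap_iff (A := ℂ) (algebraMap L ℂ).injective).mp this⟩
  haveI : Algebra.IsAlgebraic F L := Algebra.IsAlgebraic.tower_top (K := ℚ) F
  haveI : Module.IsTorsionFree F L := Module.isTorsionFree_iff_algebraMap_injective.mpr i.injective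
  haveI : Module.IsTorsionFree F ℂ := Module.isTorsionFree_iff_algebraMap_injective.mpr σ.injective
  let ρ' : L →ₐ[F] ℂ := IsAlgClosed.lift
  exact ⟨ρ'.toRingHom, fun x => ρ'.commutes x⟩

set_option maxHeartbeats 1000000 in
lemma IsTIQExt.eta_eq_one (h : IsTIQExt K L) {η d : ℂ} (hηL : η ∈ L) (hdL : d ∈ L)
    (hdI : IsIntegral ℤ d) (hη : η = 1 + 4 * d)
    (hnorm : η * (starRingEnd ℂ) η = 1) : η = 1 := by
  rcases eq_or_ne d 0 with hd0 | hd0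
  · rw [hη, hd0]; ring
  exfalso
  have hηalg : IsAlgebraic ℚ η := h.alg ⟨η, hηL⟩
  have hdalg : IsAlgebraic ℚ d := h.alg ⟨d, hdL⟩
  set F : IntermediateField ℚ ℂ := IntermediateField.adjoin ℚ {η, d} with hF
  haveI : Finite ({η, d} : Set ℂ) := Set.Finite.to_subtype (Set.toFinite _)
  haveI : FiniteDimensional ℚ F := IntermediateField.finiteDimensional_adjoin (fun x hx => by
    rcases hx with rfl | hx
    · exact hηalg.isIntegral
    · rw [Set.mem_singleton_iff] at hx; subst hx; exact hdalg.isIntegral)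
  have hηF : η ∈ F := IntermediateField.subset_adjoin ℚ _ (Set.mem_insert _ _)
  have hdF : d ∈ F := IntermediateField.subset_adjoin ℚ _ (by simp)
  set ηF : F := ⟨η, hηF⟩
  set dF : F := ⟨d, hdF⟩
  have hFL : ∀ x : ℂ, x ∈ F → x ∈ L := by
    intro x hx
    have hle : F ≤ Subfield.toIntermediateField (K := ℚ) L
        (fun q => by simpa [eq_ratCast (algebraMap ℚ ℂ) q] using SubfieldClass.ratCast_mem L q) := by
      rw [hF, IntermediateField.adjoin_le_iff]
      intro z hz
      rcases hz with rfl | hz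
      · exact hηL
      · rw [Set.mem_singleton_iff] at hz; subst hz; exact hdL
    exact hle hx
  set n : ℕ := Module.finrank ℚ F with hn
  have hn1 : 0 < n := Module.finrank_pos
  -- lower bound
  have hsub : (1 - ηF) = algebraMap ℚ F (-4) * dF := by
    apply Subtype.ext
    have h4 : ((algebraMap ℚ F (-4) : F) : ℂ) = -4 := by
      rw [show ((algebraMap ℚ F (-4) : F) : ℂ) = algebraMap F ℂ (algebraMap ℚ F (-4)) from rfl,
        ← IsScalarTower.algebraMap_apply, eq_ratCast]
      norm_num
    show 1 - η = ((algebraMap ℚ F (-4) * dF : F) : ℂ)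
    push_cast [h4]
    rw [hη]; push_cast; ring_nf
    norm_num
    rw [mul_comm]
    norm_cast
  set N : ℚ := Algebra.norm ℚ (1 - ηF) with hN
  set Nd : ℚ := Algebra.norm ℚ dF with hNd
  have hNval : N = (-4)^n * Nd := by rw [hN, hsub, map_mul, Algebra.norm_algebraMap]
  have hdFint : IsIntegral ℤ dF :=
    (isIntegral_algebraMap_iff (B := ℂ) (algebraMap F ℂ).injective).mp hdI
  obtain ⟨m, hm⟩ := IsIntegrallyClosed.isIntegral_iff.mp
    (Algebra.isIntegral_norm (R := ℤ) ℚ hdFint)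
  have hNdm : Nd = (m:ℚ) := by rw [hNd, ← hm]; simp
  have hdF0 : dF ≠ 0 := fun hc => hd0 (by simpa [dF] using congrArg (fun z : F => (z:ℂ)) hc)
  have hNd0 : Nd ≠ 0 := by rw [hNd]; exact (Algebra.norm_ne_zero_iff).mpr hdF0
  have hm0 : m ≠ 0 := by rintro rfl; apply hNd0; rw [hNdm]; simp
  have hNd1 : (1:ℝ) ≤ |(Nd : ℝ)| := by
    have h1m : (1:ℤ) ≤ |m| := by have := abs_pos.mpr hm0; omega
    have hcast : |(Nd:ℝ)| = |(m:ℝ)| := by rw [hNdm]; push_cast; ring_nf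
    rw [hcast]
    calc (1:ℝ) = ((1:ℤ):ℝ) := by norm_num
      _ ≤ (|m| : ℝ) := by exact_mod_cast h1m
      _ = |(m:ℝ)| := by push_cast; ring
  have hlower : (4:ℝ)^n ≤ |(N:ℝ)| := by
    have : |(N:ℝ)| = 4^n * |(Nd:ℝ)| := by
      rw [hNval]; push_cast
      rw [abs_mul, _root_.abs_pow]
      norm_num
    rw [this]
    nlinarith [pow_pos (by norm_num : (0:ℝ) < 4) n]
  -- upper bound
  have hprod := Algebra.norm_eq_prod_embeddings ℚ ℂ (1 - ηF)
  have habs1 : ∀ σ : F →ₐ[ℚ] ℂ, ‖σ ηF‖ = 1 := by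
    intro σ
    let iFL : F →+* L :=
      { toFun := fun x => ⟨x.1, hFL _ x.2⟩
        map_one' := rfl
        map_mul' := fun _ _ => rfl
        map_zero' := rfl
        map_add' := fun _ _ => rfl }
    obtain ⟨ρ, hρ⟩ := ringhom_extension h iFL σ.toRingHom
    set ηL : L := ⟨η, hFL _ hηF⟩
    have hη1 : σ ηF = ρ ηL := (hρ ηF).symm
    have hmul : (ηL * ⟨(starRingEnd ℂ) η, h.conj_closed _ (hFL _ hηF)⟩ : L) = 1 :=
      Subtype.ext hnorm
    have hcc := h.emb_conj_comm ρ ηL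
    have hone : ρ ηL * (starRingEnd ℂ) (ρ ηL) = 1 := by
      rw [← hcc, ← map_mul, hmul, map_one]
    have hnsq : Complex.normSq (ρ ηL) = 1 := by
      have h' := congrArg Complex.re hone
      rw [Complex.mul_conj] at h'
      simpa using h'
    have hsq : ‖ρ ηL‖ ^ 2 = 1 := by rw [Complex.sq_norm, hnsq]
    have habs : ‖ρ ηL‖ = 1 := by
      nlinarith [norm_nonneg (ρ ηL), hsq]
    rw [hη1, habs]
  have hcard : Fintype.card (F →ₐ[ℚ] ℂ) = n := AlgHom.card ℚ F ℂ
  have hupper : |(N:ℝ)| ≤ (2:ℝ)^n := by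
    have h1 : ((N:ℂ)) = ∏ σ : F →ₐ[ℚ] ℂ, σ (1 - ηF) := by
      rw [← hprod, eq_ratCast]
    have h2 : |(N:ℝ)| = ‖((N:ℂ))‖ := by
      rw [show ((N:ℂ)) = (((N:ℝ)):ℂ) by push_cast; ring, Complex.norm_real, Real.norm_eq_abs]
    rw [h2, h1, norm_prod]
    calc ∏ σ : F →ₐ[ℚ] ℂ, ‖σ (1 - ηF)‖
        ≤ ∏ _σ : F →ₐ[ℚ] ℂ, (2:ℝ) := by
          apply Finset.prod_le_prod (fun _ _ => norm_nonneg _)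
          intro σ _
          rw [map_sub, map_one]
          calc ‖1 - σ ηF‖ ≤ ‖(1:ℂ)‖ + ‖σ ηF‖ :=
                norm_sub_le _ _
            _ = 2 := by rw [habs1 σ]; norm_num
      _ = (2:ℝ)^n := by rw [Finset.prod_const, Finset.card_univ, hcard]
  have : (4:ℝ)^n ≤ (2:ℝ)^n := le_trans hlower hupper
  have hlt : (2:ℝ)^n < (4:ℝ)^n := by
    apply pow_lt_pow_left₀ (by norm_num) (by norm_num)
    omega
  linarith

end TIQ

section UnitsLemma

variable {K L : Subfield ℂ}

lemma conj_mem_ringOfInt {L : Subfield ℂ} (h : IsTIQExt K L) {x : ℂ}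
    (hx : x ∈ ringOfInt L) : (starRingEnd ℂ) x ∈ ringOfInt L :=
  ⟨h.conj_closed _ hx.1, conj_integral hx.2⟩

lemma unit_one_add (u : (Rring 2 twoNZ L)ˣ) :
    ∃ a ∈ ringOfInt L, ((u : Rring 2 twoNZ L) : ℂ) = 1 + 2*a := by
  obtain ⟨hU, a, ha, j, hj0, hj2, hUeq⟩ := (u : Rring 2 twoNZ L).2
  obtain ⟨hV, b, hb, k, hk0, hk2, hVeq⟩ := ((u⁻¹ : (Rring 2 twoNZ L)ˣ) : Rring 2 twoNZ L).2
  have hUV : ((u : Rring 2 twoNZ L) : ℂ) * ((u⁻¹ : (Rring 2 twoNZ L)ˣ) : Rring 2 twoNZ L) = 1 := by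
    have := u.mul_inv
    exact congrArg (fun z : Rring 2 twoNZ L => (z : ℂ)) this
  interval_cases j
  · exfalso
    apply not_integral_half
    have hval : (((1:ℚ)/2 : ℚ) : ℂ) =
        a * ((u⁻¹ : (Rring 2 twoNZ L)ˣ) : Rring 2 twoNZ L) := by
      push_cast
      rw [hUeq] at hUV
      push_cast at hUV
      linear_combination -hUV/2
    rw [hval]
    exact (ha.2.mul hV.2)
  · exact ⟨a, ha, by rw [hUeq]; norm_num⟩

set_option maxHeartbeats 1000000 in
lemma IsTIQExt.unit_sq_conj (h : IsTIQExt K L) (u : (Rring 2 twoNZ L)ˣ) :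
    (starRingEnd ℂ) (((u : Rring 2 twoNZ L) : ℂ)) ^ 2 = ((u : Rring 2 twoNZ L) : ℂ) ^ 2 := by
  set U : ℂ := ((u : Rring 2 twoNZ L) : ℂ) with hUdef
  set V : ℂ := (((u⁻¹ : (Rring 2 twoNZ L)ˣ) : Rring 2 twoNZ L) : ℂ) with hVdef
  have hUO : U ∈ ringOfInt L := (u : Rring 2 twoNZ L).2.1
  have hVO : V ∈ ringOfInt L := ((u⁻¹ : (Rring 2 twoNZ L)ˣ) : Rring 2 twoNZ L).2.1
  have hUV : U * V = 1 :=
    congrArg (fun z : Rring 2 twoNZ L => (z : ℂ)) u.mul_inv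
  obtain ⟨a, ha, hUeq⟩ := unit_one_add u
  obtain ⟨b, hb, hVeq⟩ := unit_one_add u⁻¹
  have hcb : (starRingEnd ℂ) b ∈ ringOfInt L := conj_mem_ringOfInt h hb
  set c : ℂ := a + (starRingEnd ℂ) b + 2 * a * ((starRingEnd ℂ) b) with hcdef
  have h2O : (2:ℂ) ∈ ringOfInt L := by
    have := intCast_mem (ringOfInt L) 2
    simpa using this
  have hc : c ∈ ringOfInt L :=
    add_mem (add_mem ha hcb) (mul_mem (mul_mem h2O ha) hcb)
  set d : ℂ := c + c^2 with hddef
  have hd : d ∈ ringOfInt L := add_mem hc (pow_mem hc 2)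
  have hconjV : (starRingEnd ℂ) V = 1 + 2 * (starRingEnd ℂ) b := by
    rw [hVdef, hVeq]; rw [map_add, map_mul, map_one, map_ofNat]
  set η : ℂ := (U * (starRingEnd ℂ) V)^2 with hηdef
  have hηd : η = 1 + 4 * d := by
    rw [hηdef, hconjV, hUdef, hUeq, hddef, hcdef]; ring
  have hconjUV : (starRingEnd ℂ) U * (starRingEnd ℂ) V = 1 := by
    rw [← map_mul, hUV, map_one]
  have hηnorm : η * (starRingEnd ℂ) η = 1 := by
    have hconjη : (starRingEnd ℂ) η = ((starRingEnd ℂ) U * V)^2 := by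
      rw [hηdef, map_pow, map_mul, Complex.conj_conj]
    rw [hconjη]
    calc (U * (starRingEnd ℂ) V)^2 * ((starRingEnd ℂ) U * V)^2
        = ((U * V) * ((starRingEnd ℂ) U * (starRingEnd ℂ) V))^2 := by ring
      _ = 1 := by rw [hUV, hconjUV]; norm_num
  have hηL : η ∈ L := by
    rw [hηd]
    refine L.add_mem L.one_mem (L.mul_mem ?_ hd.1)
    have := SubfieldClass.ratCast_mem L (4:ℚ)
    simpa using this
  have hη1 : η = 1 := h.eta_eq_one hηL hd.1 hd.2 hηd hηnorm
  -- conclude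
  have h1 : U^2 * ((starRingEnd ℂ) V)^2 = 1 := by rw [← mul_pow]; exact hη1
  have h2 : ((starRingEnd ℂ) U)^2 * ((starRingEnd ℂ) V)^2 = 1 := by
    rw [← mul_pow, hconjUV]; norm_num
  have hVne : ((starRingEnd ℂ) V)^2 ≠ 0 := by
    intro h0
    rw [h0, mul_zero] at h1
    exact one_ne_zero h1.symm
  exact mul_right_cancel₀ hVne (h2.trans h1.symm)

lemma IsTIQExt.X0_conj (h : IsTIQExt K L) {x : ℂ} (hx : x ∈ X0 L) :
    (starRingEnd ℂ) x = x := by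
  obtain ⟨u₁, u₂, u₃, u₄, rfl⟩ := hx
  simp only [map_add, map_sub, map_pow]
  rw [h.unit_sq_conj u₁, h.unit_sq_conj u₂, h.unit_sq_conj u₃, h.unit_sq_conj u₄]

lemma IsTIQExt.XX_subset (h : IsTIQExt K L) : XX L ⊆ (ringOfInt K : Set ℂ) := by
  rintro α ⟨hα, x₁, ⟨hx₁O, hx₁X⟩, x₂, ⟨hx₂O, hx₂X⟩, heq⟩
  have hfix : ∀ y : ℂ, (32:ℂ) * y ∈ X0 L → (starRingEnd ℂ) y = y := by
    intro y hy
    have hc := h.X0_conj hy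
    rw [map_mul, map_ofNat] at hc
    have h32 : (32:ℂ) ≠ 0 := by norm_num
    exact mul_left_cancel₀ h32 hc
  have hc1 : (starRingEnd ℂ) x₁ = x₁ := hfix _ hx₁X
  have hc2 : (starRingEnd ℂ) x₂ = x₂ := hfix _ hx₂X
  have hcα : (starRingEnd ℂ) α = α := by
    have := congrArg (starRingEnd ℂ) heq
    rw [map_mul, map_ofNat, map_sub, hc1, hc2, ← heq] at this
    have h4 : (4:ℂ) ≠ 0 := by norm_num
    exact mul_left_cancel₀ h4 this
  exact ⟨h.mem_of_conj_eq hα.1 hcα, hα.2⟩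

end UnitsLemma

section Construction

lemma exists_nat_bound {K₀ : Subfield ℂ} (h0alg : ∀ x : K₀, IsAlgebraic ℚ (x : ℂ))
    (x : K₀) : ∃ n : ℕ, ∀ σ : K₀ →+* ℂ, ‖σ x‖ ≤ n := by
  have halg : IsAlgebraic ℚ x :=
    (isAlgebraic_algebraMap_iff (A := ℂ) (algebraMap K₀ ℂ).injective).mp (h0alg x)
  set p := minpoly ℚ x with hp
  have hp0 : p ≠ 0 := minpoly.ne_zero halg.isIntegral
  refine ⟨((p.map (algebraMap ℚ ℂ)).roots.toFinset).sup (fun z => ⌈‖z‖⌉₊),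
    fun σ => ?_⟩
  have haev : (Polynomial.aeval (σ.toRatAlgHom x)) p = 0 := by
    rw [Polynomial.aeval_algHom_apply, minpoly.aeval, map_zero]
  have hmem : σ x ∈ (p.map (algebraMap ℚ ℂ)).roots := by
    rw [Polynomial.mem_roots_map_of_injective (algebraMap ℚ ℂ).injective hp0]
    rw [← Polynomial.aeval_def]
    exact haev
  have hmem' : σ x ∈ (p.map (algebraMap ℚ ℂ)).roots.toFinset := Multiset.mem_toFinset.mpr hmem
  have hle := Finset.le_sup (f := fun z => ⌈‖z‖⌉₊) hmem'
  calc ‖σ x‖ ≤ (⌈‖σ x‖⌉₊ : ℝ) := Nat.le_ceil _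
    _ ≤ _ := by exact_mod_cast hle

lemma mem_X1_double (K₀ : Subfield ℂ) {K L : Subfield ℂ} (h0K : K₀ ≤ K)
    (hsq : ∀ x : ℂ, x ∈ ringOfInt K₀ →
      (∀ (σ : K₀ →+* ℂ) (hx : x ∈ K₀), ∃ r : ℝ, 0 ≤ r ∧ σ ⟨x, hx⟩ = (r : ℂ)) →
      ∃ s ∈ K, s ^ 2 = x)
    (h : IsTIQExt K L) {β : ℂ} (hβ : β ∈ ringOfInt K₀)
    (hβpos : ∀ (σ : K₀ →+* ℂ) (hx : β ∈ K₀), ∃ r : ℝ, 0 ≤ r ∧ σ ⟨β, hx⟩ = (r : ℂ)) :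
    2 * β ∈ X1 L := by
  obtain ⟨s, hsK, hs2⟩ := hsq β hβ hβpos
  have h16O : (16:ℂ) ∈ ringOfInt K₀ := by
    have := intCast_mem (ringOfInt K₀) 16; simpa using this
  have h16 : (1 + 16*β) ∈ ringOfInt K₀ :=
    add_mem (ringOfInt K₀).one_mem (mul_mem h16O hβ)
  have h16pos : ∀ (σ : K₀ →+* ℂ) (hx : (1 + 16*β) ∈ K₀),
      ∃ r : ℝ, 0 ≤ r ∧ σ ⟨1 + 16*β, hx⟩ = (r : ℂ) := by
    intro σ hx
    obtain ⟨r, hr0, hrval⟩ := hβpos σ hβ.1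
    refine ⟨1 + 16*r, by linarith, ?_⟩
    have hsplit : (⟨1 + 16*β, hx⟩ : K₀) = 1 + ((16:ℕ) : K₀) * ⟨β, hβ.1⟩ := by
      apply Subtype.ext; push_cast
      show 1 + 16*β = 1 + (((16:ℕ) : K₀) : ℂ) * β
      norm_cast
    rw [hsplit, map_add, map_one, map_mul, map_natCast, hrval]
    push_cast; ring
  obtain ⟨x, hxK, hx2⟩ := hsq _ h16 h16pos
  -- integrality
  have hsI : IsIntegral ℤ s := by
    apply IsIntegral.of_pow (by norm_num : (0:ℕ) < 2)
    rw [hs2]; exact hβ.2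
  have hxI : IsIntegral ℤ x := by
    apply IsIntegral.of_pow (by norm_num : (0:ℕ) < 2)
    rw [hx2]; exact h16.2
  set w : ℂ := (x - 1)/2 with hw
  have hx1 : x = 1 + 2*w := by rw [hw]; field_simp; ring
  have h4βI : IsIntegral ℤ (4*β) := by
    have h4O : (4:ℂ) ∈ ringOfInt K₀ := by
      have := intCast_mem (ringOfInt K₀) 4; simpa using this
    exact (mul_mem h4O hβ : 4*β ∈ ringOfInt K₀).2
  have hwI : IsIntegral ℤ w := by
    haveI : Algebra.IsIntegral ℤ (integralClosure ℤ ℂ) :=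
      ⟨fun z => integralClosure.isIntegral z⟩
    apply isIntegral_trans (A := integralClosure ℤ ℂ) w
    refine ⟨Polynomial.X^2 + (Polynomial.X - Polynomial.C (⟨4*β, h4βI⟩ : integralClosure ℤ ℂ)),
      ?_, ?_⟩
    · apply (Polynomial.monic_X_pow 2).add_of_left
      rw [Polynomial.degree_X_sub_C, Polynomial.degree_X_pow]
      norm_num
    · simp only [Polynomial.eval₂_add, Polynomial.eval₂_sub, Polynomial.eval₂_pow,
        Polynomial.eval₂_X, Polynomial.eval₂_C]
      have : (algebraMap (integralClosure ℤ ℂ) ℂ) (⟨4*β, h4βI⟩ : integralClosure ℤ ℂ) = 4*β := rfl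
      rw [this]
      have h' : (1 + 2*w)^2 = 1 + 16*β := by rw [← hx1]; exact hx2
      linear_combination h'/4
  -- memberships in L
  have h2L : (2:ℂ) ∈ L := by
    have := SubfieldClass.ratCast_mem L (2:ℚ); simpa using this
  have hsL : s ∈ L := h.le hsK
  have hxL : x ∈ L := h.le hxK
  have hβL : β ∈ L := h.le (h0K hβ.1)
  have hwL : w ∈ L := by
    rw [hw]; exact L.div_mem (L.sub_mem hxL L.one_mem) h2L
  have h2O : (2:ℂ) ∈ ringOfInt L := by
    have := intCast_mem (ringOfInt L) 2; simpa using this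
  have h4O : (4:ℂ) ∈ ringOfInt L := by
    have := intCast_mem (ringOfInt L) 4; simpa using this
  have hsO : s ∈ ringOfInt L := ⟨hsL, hsI⟩
  have hxO : x ∈ ringOfInt L := ⟨hxL, hxI⟩
  have hwO : w ∈ ringOfInt L := ⟨hwL, hwI⟩
  have huO : (x + 4*s) ∈ ringOfInt L := add_mem hxO (mul_mem h4O hsO)
  have hu'O : (x - 4*s) ∈ ringOfInt L := sub_mem hxO (mul_mem h4O hsO)
  have hu_mem : (x + 4*s) ∈ Rring 2 twoNZ L :=
    Rset_norm twoNZ huO (add_mem hwO (mul_mem h2O hsO)) (j := 1)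
      (by push_cast; linear_combination hx1)
  have hu'_mem : (x - 4*s) ∈ Rring 2 twoNZ L :=
    Rset_norm twoNZ hu'O (sub_mem hwO (mul_mem h2O hsO)) (j := 1)
      (by push_cast; linear_combination hx1)
  have hmulu : (x + 4*s) * (x - 4*s) = 1 := by linear_combination hx2 - 16*hs2
  set Uu : (Rring 2 twoNZ L)ˣ :=
    { val := ⟨x + 4*s, hu_mem⟩
      inv := ⟨x - 4*s, hu'_mem⟩
      val_inv := Subtype.ext (by
        simp only [MulMemClass.mk_mul_mk, OneMemClass.coe_one]; linear_combination hmulu)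
      inv_val := Subtype.ext (by
        simp only [MulMemClass.mk_mul_mk, OneMemClass.coe_one]; linear_combination hmulu) } with hUu
  set Vu : (Rring 2 twoNZ L)ˣ :=
    { val := ⟨x - 4*s, hu'_mem⟩
      inv := ⟨x + 4*s, hu_mem⟩
      val_inv := Subtype.ext (by
        simp only [MulMemClass.mk_mul_mk, OneMemClass.coe_one]; linear_combination hmulu)
      inv_val := Subtype.ext (by
        simp only [MulMemClass.mk_mul_mk, OneMemClass.coe_one]; linear_combination hmulu) } with hVu
  refine ⟨mul_mem h2O ⟨hβL, hβ.2⟩, ⟨Uu, Vu, 1, 1, ?_⟩⟩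
  show (32:ℂ) * (2*β) = (x + 4*s)^2 + (x - 4*s)^2 - ((1 : Rring 2 twoNZ L) : ℂ)^2
    - ((1 : Rring 2 twoNZ L) : ℂ)^2
  rw [OneMemClass.coe_one]
  linear_combination -2*hx2 - 32*hs2

end Construction

/-- Let `K₀ ⊆ K` be totally real fields such that every totally nonnegative element of `O_{K₀}`
has a square root in `K`, and let `L` be a totally imaginary quadratic extension of `K`. Then
the sets `X₀ = {u₁² + u₂² − u₃² − u₄² : uᵢ ∈ R_{2,L}ˣ}`, `X₁ = {d ∈ O_L : 32d ∈ X₀}` and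
`X = {α ∈ O_L : ∃ x₁ x₂ ∈ X₁, 4α = x₁ − x₂}` satisfy `O_{K₀} ⊆ X ⊆ O_K`. -/
theorem X_between (K₀ K L : Subfield ℂ) (h0 : IsTotallyRealSubfield K₀)
    (h0alg : ∀ x : K₀, IsAlgebraic ℚ (x : ℂ)) (h0K : K₀ ≤ K)
    (hsq : ∀ x : ℂ, x ∈ ringOfInt K₀ →
      (∀ (σ : K₀ →+* ℂ) (hx : x ∈ K₀), ∃ r : ℝ, 0 ≤ r ∧ σ ⟨x, hx⟩ = (r : ℂ)) →
      ∃ s ∈ K, s ^ 2 = x)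
    (h : IsTIQExt K L) :
    (ringOfInt K₀ : Set ℂ) ⊆ XX L ∧ XX L ⊆ (ringOfInt K : Set ℂ) := by
  constructor
  · intro α hα
    have hαK₀ : α ∈ K₀ := hα.1
    have hαI : IsIntegral ℤ α := hα.2
    set xα : K₀ := ⟨α, hαK₀⟩ with hxα
    obtain ⟨n, hn⟩ := exists_nat_bound h0alg xα
    have h2K₀ : (2:ℂ) ∈ ringOfInt K₀ := by
      have := intCast_mem (ringOfInt K₀) 2; simpa using this
    have hb2 : ((2*n : ℕ) : ℂ) ∈ ringOfInt K₀ := by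
      have := intCast_mem (ringOfInt K₀) (2*n)
      push_cast at this; simpa using this
    have hb1 : (2*α + (2*n : ℕ)) ∈ ringOfInt K₀ := add_mem (mul_mem h2K₀ hα) hb2
    have hreal : ∀ σ : K₀ →+* ℂ, (σ xα).im = 0 := fun σ => h0 σ xα
    have hb1pos : ∀ (σ : K₀ →+* ℂ) (hx : (2*α + (2*n : ℕ)) ∈ K₀),
        ∃ r : ℝ, 0 ≤ r ∧ σ ⟨2*α + (2*n : ℕ), hx⟩ = (r:ℂ) := by
      intro σ hx
      obtain ⟨t, ht⟩ : ∃ t : ℝ, σ xα = (t:ℂ) :=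
        ⟨(σ xα).re, by apply Complex.ext <;> simp [hreal σ]⟩
      refine ⟨2*t + 2*n, ?_, ?_⟩
      · have h2 := hn σ
        rw [ht, Complex.norm_real, Real.norm_eq_abs] at h2
        have h3 := (abs_le.mp h2).1
        linarith
      · have hsplit : (⟨2*α + (2*n : ℕ), hx⟩ : K₀) = ((2:ℕ):K₀) * xα + ((2*n : ℕ) : K₀) := by
          apply Subtype.ext; push_cast; norm_cast
        rw [hsplit, map_add, map_mul, map_natCast, map_natCast, ht]
        push_cast; ring
    have hb2pos : ∀ (σ : K₀ →+* ℂ) (hx : ((2*n : ℕ) : ℂ) ∈ K₀),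
        ∃ r : ℝ, 0 ≤ r ∧ σ ⟨((2*n : ℕ) : ℂ), hx⟩ = (r:ℂ) := by
      intro σ hx
      refine ⟨2*n, by positivity, ?_⟩
      have hsplit : (⟨((2*n : ℕ) : ℂ), hx⟩ : K₀) = ((2*n : ℕ) : K₀) := by
        apply Subtype.ext; norm_cast
      rw [hsplit, map_natCast]
      push_cast; ring
    have hX11 := mem_X1_double K₀ h0K hsq h hb1 hb1pos
    have hX12 := mem_X1_double K₀ h0K hsq h hb2 hb2pos
    refine ⟨⟨h.le (h0K hαK₀), hαI⟩, 2*(2*α + (2*n : ℕ)), hX11, 2*((2*n:ℕ):ℂ), hX12, ?_⟩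
    push_cast; ring
  · exact h.XX_subset

end
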